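/- Let W : X → P(Y) with X, Y finite, α ∈ (0,1], and C a nonempty convex set of probability mass functions on X. Then the minimax equality holds: sup_{P ∈ C} inf_Q Σ_x P(x) D_α(W(x)‖Q) = inf_Q sup_{P ∈ C} Σ_x P(x) D_α(W(x)‖Q), where Q ranges over probability mass functions on Y. -/

import Mathlib

open scoped BigOperators

/-- A probability mass function on a finite type. -/
def IsPMF {Y : Type*} [Fintype Y] (Q : Y → ℝ) : Prop :=
  (∀ y, 0 ≤ Q y) ∧ ∑ y, Q y = 1

/-- The power sum appearing in the Rényi divergence; since `(0:ℝ) ^ (1-α) = 0` for `1-α > 0`,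
the sum automatically restricts to `y` with `Q y > 0`. -/
noncomputable def rSum {Y : Type*} [Fintype Y] (α : ℝ) (W Q : Y → ℝ) : ℝ :=
  ∑ y, W y ^ α * Q y ^ (1 - α)

/-- Order-`α` Rényi divergence (for `α ∈ (0,1)`), valued in `EReal`, with the convention
that it is `⊤` when the power sum vanishes. -/
noncomputable def rDiv {Y : Type*} [Fintype Y] (α : ℝ) (W Q : Y → ℝ) : EReal :=
  if rSum α W Q = 0 then ⊤
  else (((1 / (α - 1)) * Real.log (rSum α W Q) : ℝ) : EReal)

/-- Kullback–Leibler divergence, valued in `EReal`, `⊤` unless `W ≪ Q`. -/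
noncomputable def kDiv {Y : Type*} [Fintype Y] (W Q : Y → ℝ) : EReal :=
  if ∀ y, Q y = 0 → W y = 0 then
    (((∑ y, if W y = 0 then 0 else W y * Real.log (W y / Q y)) : ℝ) : EReal)
  else ⊤

/-- Order-`α` divergence for `α ∈ (0,1]`: Rényi for `α ≠ 1`, KL for `α = 1`. -/
noncomputable def dA {Y : Type*} [Fintype Y] (α : ℝ) (W Q : Y → ℝ) : EReal :=
  if α = 1 then kDiv W Q else rDiv α W Q

/-- Conditional divergence `D_α(W‖Q|P) = ∑_x P(x) D_α(W(x)‖Q)`. -/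
noncomputable def cDiv {X Y : Type*} [Fintype X] [Fintype Y]
    (α : ℝ) (W : X → Y → ℝ) (Q : Y → ℝ) (P : X → ℝ) : EReal :=
  ∑ x, (P x : EReal) * dA α (W x) Q

/-- Augustin information `I_α(P;W) = inf_Q D_α(W‖Q|P)`. -/
noncomputable def aInfo {X Y : Type*} [Fintype X] [Fintype Y]
    (α : ℝ) (P : X → ℝ) (W : X → Y → ℝ) : EReal :=
  ⨅ Q ∈ {Q : Y → ℝ | IsPMF Q}, cDiv α W Q P

/-!
Sion's theorem does not apply to `cDiv` on the whole simplex: at a boundary point `Q`, the map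
`P ↦ cDiv α W Q P` jumps to `⊤` off a face and is not upper semicontinuous. It does apply on the
image of the simplex under `Q ↦ ε • u + (1 - ε) • Q` for a strictly positive `u`, where all
divergences are real, convex in `Q` and linear in `P`. Letting `ε → 0` costs at most `ε` times a
bound at `u`, by convexity, as soon as every infimum over the simplex is approached by strictly
positive `Q`. That holds because each divergence is continuous on the nonnegative orthant as an
`EReal`-valued map: it has the form `a + c log F(Q)`, read as `⊤` where `F` vanishes, with `c < 0`
and `F ≥ 0` continuous (`F = rSum` for Rényi, the weighted geometric mean `∏ Q ^ W` for KL).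
-/

open Real Set Filter Topology

theorem EReal.coe_finset_sum {ι : Type*} (s : Finset ι) (f : ι → ℝ) :
    ((∑ i ∈ s, f i : ℝ) : EReal) = ∑ i ∈ s, (f i : EReal) :=
  map_sum (⟨⟨Real.toEReal, EReal.coe_zero⟩, EReal.coe_add⟩ : ℝ →+ EReal) f s

section ContinuityInEReal

variable {E : Type*} [TopologicalSpace E] {s : Set E}

theorem EReal.continuousOn_coe_mul (c : ℝ) {f : E → EReal} (hf : ContinuousOn f s) :
    ContinuousOn (fun x => (c : EReal) * f x) s := by
  rcases eq_or_ne c 0 with rfl | hc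
  · simpa using continuousOn_const
  have hc' : (c : EReal) ≠ 0 := by exact_mod_cast hc
  exact fun x hx => ContinuousAt.comp_continuousWithinAt (f := fun x => ((c : EReal), f x))
    (EReal.continuousAt_mul (.inl hc') (.inl hc') (.inl (EReal.coe_ne_bot c))
      (.inl (EReal.coe_ne_top c))) (continuousWithinAt_const.prodMk (hf x hx))

theorem EReal.continuousOn_finset_sum {ι : Type*} (t : Finset ι) {f : ι → E → EReal}
    (hf : ∀ i ∈ t, ContinuousOn (f i) s) (hbot : ∀ i ∈ t, ∀ x ∈ s, f i x ≠ ⊥) :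
    ContinuousOn (fun x => ∑ i ∈ t, f i x) s := by
  classical
  induction t using Finset.induction_on with
  | empty => simpa using continuousOn_const
  | insert a t ha ih =>
    simp only [Finset.sum_insert ha]
    have hsum : ∀ x ∈ s, ∑ i ∈ t, f i x ≠ ⊥ := fun x hx =>
      Finset.sum_induction _ (· ≠ ⊥) (fun _ _ h₁ h₂ => EReal.add_ne_bot_iff.2 ⟨h₁, h₂⟩)
        EReal.zero_ne_bot fun i hi => hbot i (Finset.mem_insert_of_mem hi) x hx
    have hrest := ih (fun i hi => hf i (Finset.mem_insert_of_mem hi))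
      (fun i hi => hbot i (Finset.mem_insert_of_mem hi))
    exact fun x hx => ContinuousAt.comp_continuousWithinAt
      (f := fun x => (f a x, ∑ i ∈ t, f i x))
      (EReal.continuousAt_add (.inr (hsum x hx)) (.inl (hbot a (by simp) x hx)))
      ((hf a (by simp) x hx).prodMk (hrest x hx))

end ContinuityInEReal

theorem continuousOn_ite_log (a : ℝ) {c : ℝ} (hc : c < 0) :
    ContinuousOn (fun r : ℝ => if r = 0 then (⊤ : EReal) else ((a + c * log r : ℝ) : EReal))
      (Ici 0) := by
  intro r hr
  rcases (mem_Ici.1 hr).eq_or_lt with rfl | hr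
  · rw [← continuousWithinAt_Ioi_iff_Ici, ContinuousWithinAt, if_pos rfl]
    have hlog : Tendsto (fun r => a + c * log r) (𝓝[>] 0) atTop :=
      tendsto_atTop_add_const_left _ a (tendsto_log_nhdsGT_zero.const_mul_atBot_of_neg hc)
    refine (EReal.tendsto_coe_atTop.comp hlog).congr' ?_
    filter_upwards [self_mem_nhdsWithin] with r (hr : 0 < r)
    rw [if_neg hr.ne', Function.comp_apply]
  · have hcont : ContinuousAt (fun r : ℝ => ((a + c * log r : ℝ) : EReal)) r :=
      continuous_coe_real_ereal.continuousAt.comp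
        (continuousAt_const.add (continuousAt_const.mul (continuousAt_log hr.ne')))
    refine (hcont.congr ?_).continuousWithinAt
    filter_upwards [eventually_ne_nhds hr.ne'] with r hr
    rw [if_neg hr]

section ConvexSum

variable {𝕜 E β ι : Type*} [Semiring 𝕜] [PartialOrder 𝕜] [AddCommMonoid E] [SMul 𝕜 E]
  [AddCommMonoid β] [PartialOrder β] [IsOrderedAddMonoid β] [Module 𝕜 β] {s : Set E}

theorem ConvexOn.finset_sum (t : Finset ι) {f : ι → E → β} (hs : Convex 𝕜 s)
    (hf : ∀ i ∈ t, ConvexOn 𝕜 s (f i)) : ConvexOn 𝕜 s (fun x => ∑ i ∈ t, f i x) := by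
  classical
  induction t using Finset.induction_on with
  | empty => simpa using convexOn_const 0 hs
  | insert a t ha ih =>
    simp only [Finset.sum_insert ha]
    exact (hf a (by simp)).add (ih fun i hi => hf i (Finset.mem_insert_of_mem hi))

theorem ConcaveOn.finset_sum (t : Finset ι) {f : ι → E → β} (hs : Convex 𝕜 s)
    (hf : ∀ i ∈ t, ConcaveOn 𝕜 s (f i)) : ConcaveOn 𝕜 s (fun x => ∑ i ∈ t, f i x) :=
  ConvexOn.finset_sum (β := βᵒᵈ) t hs hf

end ConvexSum

theorem ConcaveOn.log_comp {E : Type*} [AddCommMonoid E] [Module ℝ E] {s : Set E} {f : E → ℝ}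
    (hf : ConcaveOn ℝ s f) (hpos : ∀ x ∈ s, 0 < f x) : ConcaveOn ℝ s (fun x => log (f x)) := by
  refine ⟨hf.1, fun x hx x' hx' a b ha hb hab => ?_⟩
  calc a • log (f x) + b • log (f x') ≤ log (a • f x + b • f x') :=
        strictConcaveOn_log_Ioi.concaveOn.2 (hpos x hx) (hpos x' hx') ha hb hab
    _ ≤ log (f (a • x + b • x')) :=
        log_le_log (convex_Ioi (0 : ℝ) (hpos x hx) (hpos x' hx') ha hb hab)
          (hf.2 hx hx' ha hb hab)

section Orthant

variable {ι : Type*}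

theorem convex_setOf_forall_pos : Convex ℝ {Q : ι → ℝ | ∀ i, 0 < Q i} := by
  simpa only [Set.pi, mem_univ, true_implies, mem_Ioi] using
    convex_pi (𝕜 := ℝ) (s := univ) (t := fun _ : ι => Ioi (0 : ℝ)) fun _ _ => convex_Ioi 0

theorem exists_pos_mem_stdSimplex [Fintype ι] [Nonempty ι] :
    ∃ u ∈ stdSimplex ℝ ι, ∀ i, 0 < u i := by
  have hcard : (0 : ℝ) < Fintype.card ι := Nat.cast_pos.2 Fintype.card_pos
  refine ⟨fun _ => (Fintype.card ι : ℝ)⁻¹, ⟨fun _ => (inv_pos.2 hcard).le, ?_⟩,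
    fun _ => inv_pos.2 hcard⟩
  rw [Finset.sum_const, Finset.card_univ, nsmul_eq_mul, mul_inv_cancel₀ hcard.ne']

theorem smul_add_one_sub_smul_pos {u Q : ι → ℝ} (hu : ∀ i, 0 < u i) (hQ : ∀ i, 0 ≤ Q i)
    {ε : ℝ} (hε : ε ∈ Ioc (0 : ℝ) 1) (i : ι) : 0 < (ε • u + (1 - ε) • Q) i := by
  simp only [Pi.add_apply, Pi.smul_apply, smul_eq_mul]
  nlinarith [hu i, hQ i, hε.1, hε.2]

end Orthant

section Divergences

variable {X Y : Type*} [Fintype X] [Fintype Y]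

theorem continuous_rSum {α : ℝ} (hα : α ≤ 1) (W : Y → ℝ) : Continuous (rSum α W) :=
  continuous_finsetSum _ fun y _ =>
    continuous_const.mul ((continuous_apply y).rpow_const fun _ => .inr (by linarith))

theorem rSum_nonneg (α : ℝ) {W Q : Y → ℝ} (hW : ∀ y, 0 ≤ W y) (hQ : ∀ y, 0 ≤ Q y) :
    0 ≤ rSum α W Q :=
  Finset.sum_nonneg fun y _ => mul_nonneg (rpow_nonneg (hW y) _) (rpow_nonneg (hQ y) _)

theorem rSum_pos (α : ℝ) {W Q : Y → ℝ} (hW : IsPMF W) (hQ : ∀ y, 0 < Q y) :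
    0 < rSum α W Q := by
  obtain ⟨y, -, hy⟩ := (Finset.sum_pos_iff_of_nonneg fun y _ => hW.1 y).1 (hW.2 ▸ one_pos)
  exact Finset.sum_pos' (fun y _ => mul_nonneg (rpow_nonneg (hW.1 y) _) (rpow_nonneg (hQ y).le _))
    ⟨y, Finset.mem_univ y, mul_pos (rpow_pos_of_pos hy _) (rpow_pos_of_pos (hQ y) _)⟩

theorem continuousOn_rDiv {α : ℝ} (hα : α < 1) {W : Y → ℝ} (hW : ∀ y, 0 ≤ W y) :
    ContinuousOn (rDiv α W) {Q | ∀ y, 0 ≤ Q y} := by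
  have hc : 1 / (α - 1) < 0 := one_div_neg.2 (by linarith)
  refine ((continuousOn_ite_log 0 hc).comp (continuous_rSum hα.le W).continuousOn
    fun Q hQ => rSum_nonneg α hW hQ).congr fun Q _ => ?_
  simp only [rDiv, Function.comp_apply, zero_add]

theorem kDiv_eq_ite {W Q : Y → ℝ} (hQ : ∀ y, 0 ≤ Q y) :
    kDiv W Q = if ∏ y, Q y ^ W y = 0 then ⊤
      else ((∑ y, W y * log (W y) + -1 * log (∏ y, Q y ^ W y) : ℝ) : EReal) := by
  have hprod : ∏ y, Q y ^ W y = 0 ↔ ¬ ∀ y, Q y = 0 → W y = 0 := by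
    simp [Finset.prod_eq_zero_iff, rpow_eq_zero_iff_of_nonneg (hQ _)]
  unfold kDiv
  by_cases hac : ∀ y, Q y = 0 → W y = 0
  · have hQpos : ∀ y, W y ≠ 0 → 0 < Q y := fun y hWy => (hQ y).lt_of_ne' fun h => hWy (hac y h)
    have hfactor : ∀ y ∈ Finset.univ, Q y ^ W y ≠ 0 := fun y _ => by
      by_cases hWy : W y = 0
      · simp [hWy]
      · exact (rpow_pos_of_pos (hQpos y hWy) _).ne'
    rw [if_pos hac, if_neg (by rwa [hprod, not_not]), EReal.coe_eq_coe_iff, log_prod hfactor,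
      neg_one_mul, ← sub_eq_add_neg, ← Finset.sum_sub_distrib]
    refine Finset.sum_congr rfl fun y _ => ?_
    by_cases hWy : W y = 0
    · simp [hWy]
    · rw [if_neg hWy, log_rpow (hQpos y hWy), log_div hWy (hQpos y hWy).ne']
      ring
  · rw [if_neg hac, if_pos (hprod.2 hac)]

theorem continuousOn_kDiv {W : Y → ℝ} (hW : ∀ y, 0 ≤ W y) :
    ContinuousOn (kDiv W) {Q | ∀ y, 0 ≤ Q y} := by
  have hprod : Continuous fun Q : Y → ℝ => ∏ y, Q y ^ W y :=
    continuous_finsetProd _ fun y _ => (continuous_apply y).rpow_const fun _ => .inr (hW y)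
  refine ((continuousOn_ite_log _ neg_one_lt_zero).comp hprod.continuousOn fun Q hQ => ?_).congr
    fun Q hQ => kDiv_eq_ite hQ
  exact Finset.prod_nonneg fun y _ => rpow_nonneg (hQ y) _

theorem continuousOn_dA {α : ℝ} (hα : α ≤ 1) {W : Y → ℝ} (hW : ∀ y, 0 ≤ W y) :
    ContinuousOn (dA α W) {Q | ∀ y, 0 ≤ Q y} := by
  rcases hα.lt_or_eq with hα | rfl
  · rw [show dA α W = rDiv α W from funext fun Q => if_neg hα.ne]
    exact continuousOn_rDiv hα hW
  · rw [show dA 1 W = kDiv W from funext fun Q => if_pos rfl]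
    exact continuousOn_kDiv hW

theorem dA_ne_bot (α : ℝ) (W Q : Y → ℝ) : dA α W Q ≠ ⊥ := by
  unfold dA kDiv rDiv
  split_ifs <;> simp [-EReal.coe_mul]

theorem continuousOn_cDiv {α : ℝ} (hα : α ≤ 1) {W : X → Y → ℝ} (hW : ∀ x y, 0 ≤ W x y)
    {P : X → ℝ} (hP : ∀ x, 0 ≤ P x) :
    ContinuousOn (fun Q => cDiv α W Q P) {Q | ∀ y, 0 ≤ Q y} :=
  EReal.continuousOn_finset_sum _
    (fun x _ => EReal.continuousOn_coe_mul _ (continuousOn_dA hα (hW x)))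
    fun x _ _ _ => (EReal.mul_ne_bot _ _).2 ⟨.inl (EReal.coe_ne_bot _), .inr (dA_ne_bot _ _ _),
      .inl (EReal.coe_ne_top _), .inl (EReal.coe_nonneg.2 (hP x))⟩

theorem exists_pos_cDiv_lt {α : ℝ} (hα : α ≤ 1) {W : X → Y → ℝ} (hW : ∀ x y, 0 ≤ W x y)
    {P : X → ℝ} (hP : ∀ x, 0 ≤ P x) {u : Y → ℝ} (hu : u ∈ stdSimplex ℝ Y) (hu0 : ∀ y, 0 < u y)
    {Q : Y → ℝ} (hQ : Q ∈ stdSimplex ℝ Y) {t : EReal} (ht : cDiv α W Q P < t) :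
    ∃ Q' ∈ stdSimplex ℝ Y, (∀ y, 0 < Q' y) ∧ cDiv α W Q' P < t := by
  have hmem : ∀ ε ∈ Ioc (0 : ℝ) 1, ε • u + (1 - ε) • Q ∈ stdSimplex ℝ Y := fun ε hε =>
    convex_stdSimplex ℝ Y hu hQ hε.1.le (sub_nonneg.2 hε.2) (add_sub_cancel ε 1)
  have hlim : Tendsto (fun ε : ℝ => cDiv α W (ε • u + (1 - ε) • Q) P) (𝓝[>] 0)
      (𝓝 (cDiv α W Q P)) := by
    refine ((continuousOn_cDiv hα hW hP) Q hQ.1).tendsto.comp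
      (tendsto_nhdsWithin_iff.2 ⟨?_, ?_⟩)
    · exact (Continuous.tendsto' (by fun_prop) 0 Q (by simp)).mono_left nhdsWithin_le_nhds
    · filter_upwards [Ioc_mem_nhdsGT one_pos] with ε hε using (hmem ε hε).1
  obtain ⟨ε, hεt, hε⟩ :=
    ((hlim.eventually (eventually_lt_nhds ht)).and (Ioc_mem_nhdsGT one_pos)).exists
  exact ⟨_, hmem ε hε, smul_add_one_sub_smul_pos hu0 hQ.1 hε, hεt⟩

noncomputable def dAReal (α : ℝ) (W Q : Y → ℝ) : ℝ :=
  if α = 1 then ∑ y, W y * log (W y / Q y) else 1 / (α - 1) * log (rSum α W Q)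

noncomputable def cDivReal (α : ℝ) (W : X → Y → ℝ) (Q : Y → ℝ) (P : X → ℝ) : ℝ :=
  ∑ x, P x * dAReal α (W x) Q

theorem dA_eq_dAReal (α : ℝ) {W Q : Y → ℝ} (hW : IsPMF W) (hQ : ∀ y, 0 < Q y) :
    dA α W Q = dAReal α W Q := by
  unfold dA dAReal
  split_ifs
  · rw [kDiv, if_pos fun y hy => absurd hy (hQ y).ne', EReal.coe_eq_coe_iff]
    exact Finset.sum_congr rfl fun y _ => by split_ifs with h <;> simp [h]
  · rw [rDiv, if_neg (rSum_pos α hW hQ).ne']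

theorem cDiv_eq_cDivReal (α : ℝ) {W : X → Y → ℝ} (hW : ∀ x, IsPMF (W x)) {Q : Y → ℝ}
    (hQ : ∀ y, 0 < Q y) (P : X → ℝ) : cDiv α W Q P = cDivReal α W Q P := by
  simp only [cDiv, cDivReal, dA_eq_dAReal α (hW _) hQ, EReal.coe_finset_sum, EReal.coe_mul]

theorem convexOn_sum_mul_log_div {W : Y → ℝ} (hW : ∀ y, 0 ≤ W y) :
    ConvexOn ℝ {Q : Y → ℝ | ∀ y, 0 < Q y} (fun Q => ∑ y, W y * log (W y / Q y)) := by
  refine ConvexOn.finset_sum _ convex_setOf_forall_pos fun y _ => ?_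
  have hneglog : ConvexOn ℝ {Q : Y → ℝ | ∀ y, 0 < Q y} (fun Q => -log (Q y)) :=
    (strictConcaveOn_log_Ioi.concaveOn.neg.comp_linearMap
      (LinearMap.proj (R := ℝ) (φ := fun _ : Y => ℝ) y)).subset
      (fun (Q : Y → ℝ) (hQ : ∀ y, 0 < Q y) => hQ y) convex_setOf_forall_pos
  refine ((convexOn_const (W y * log (W y)) convex_setOf_forall_pos).add
    (hneglog.smul (hW y))).congr fun (Q : Y → ℝ) (hQ : ∀ y, 0 < Q y) => ?_
  rcases (hW y).eq_or_lt with h | h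
  · simp [← h]
  · simp only [Pi.add_apply, smul_eq_mul, log_div h.ne' (hQ y).ne']
    ring

theorem concaveOn_rSum {α : ℝ} (hα : α ∈ Icc (0 : ℝ) 1) {W : Y → ℝ} (hW : ∀ y, 0 ≤ W y) :
    ConcaveOn ℝ {Q : Y → ℝ | ∀ y, 0 < Q y} (rSum α W) := by
  refine ConcaveOn.finset_sum _ convex_setOf_forall_pos fun y _ => ?_
  have hpow : ConcaveOn ℝ {Q : Y → ℝ | ∀ y, 0 < Q y} (fun Q => Q y ^ (1 - α)) :=
    ((concaveOn_rpow (sub_nonneg.2 hα.2) (sub_le_self 1 hα.1)).comp_linearMap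
      (LinearMap.proj (R := ℝ) (φ := fun _ : Y => ℝ) y)).subset
      (fun (Q : Y → ℝ) (hQ : ∀ y, 0 < Q y) => (hQ y).le) convex_setOf_forall_pos
  exact hpow.smul (rpow_nonneg (hW y) α)

theorem convexOn_dAReal {α : ℝ} (hα : α ∈ Icc (0 : ℝ) 1) {W : Y → ℝ} (hW : IsPMF W) :
    ConvexOn ℝ {Q : Y → ℝ | ∀ y, 0 < Q y} (dAReal α W) := by
  by_cases h1 : α = 1
  · rw [show dAReal α W = fun Q => ∑ y, W y * log (W y / Q y) from funext fun Q => if_pos h1]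
    exact convexOn_sum_mul_log_div hW.1
  have hlog := (concaveOn_rSum hα hW.1).log_comp fun Q hQ => rSum_pos α hW hQ
  refine (hlog.neg.smul (inv_nonneg.2 (sub_nonneg.2 hα.2))).congr fun Q _ => ?_
  have : α - 1 ≠ 0 := sub_ne_zero.2 h1
  simp only [dAReal, if_neg h1, Pi.neg_apply, smul_eq_mul]
  field_simp
  ring

theorem convexOn_cDivReal {α : ℝ} (hα : α ∈ Icc (0 : ℝ) 1) {W : X → Y → ℝ}
    (hW : ∀ x, IsPMF (W x)) {P : X → ℝ} (hP : ∀ x, 0 ≤ P x) :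
    ConvexOn ℝ {Q : Y → ℝ | ∀ y, 0 < Q y} (fun Q => cDivReal α W Q P) :=
  ConvexOn.finset_sum _ convex_setOf_forall_pos fun x _ => (convexOn_dAReal hα (hW x)).smul (hP x)

theorem concaveOn_cDivReal (α : ℝ) (W : X → Y → ℝ) (Q : Y → ℝ) {C : Set (X → ℝ)}
    (hC : Convex ℝ C) : ConcaveOn ℝ C (cDivReal α W Q) := by
  refine ⟨hC, fun P _ P' _ a b _ _ _ => le_of_eq ?_⟩
  simp only [cDivReal, Pi.add_apply, Pi.smul_apply, smul_eq_mul, add_mul, Finset.sum_add_distrib,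
    Finset.mul_sum, mul_assoc]

theorem iInf_iSup_cDiv_le_iSup_iInf_cDivReal {α : ℝ} (hα : α ∈ Icc (0 : ℝ) 1)
    {W : X → Y → ℝ} (hW : ∀ x, IsPMF (W x)) {C : Set (X → ℝ)} (hC : ∀ P ∈ C, ∀ x, 0 ≤ P x)
    (hCconv : Convex ℝ C) {u : Y → ℝ} (hu : u ∈ stdSimplex ℝ Y) (hu0 : ∀ y, 0 < u y) {ε : ℝ}
    (hε : ε ∈ Ioc (0 : ℝ) 1) :
    ⨅ Q ∈ stdSimplex ℝ Y, ⨆ P ∈ C, cDiv α W Q P ≤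
      ⨆ P ∈ C, ⨅ Q ∈ stdSimplex ℝ Y, (cDivReal α W (ε • u + (1 - ε) • Q) P : EReal) := by
  set H : (Y → ℝ) → Y → ℝ := fun Q => ε • u + (1 - ε) • Q
  have hHpos : ∀ Q ∈ stdSimplex ℝ Y, ∀ y, 0 < H Q y := fun Q hQ =>
    smul_add_one_sub_smul_pos hu0 hQ.1 hε
  have hH : ∀ Q ∈ stdSimplex ℝ Y, H Q ∈ stdSimplex ℝ Y := fun Q hQ =>
    convex_stdSimplex ℝ Y hu hQ hε.1.le (sub_nonneg.2 hε.2) (add_sub_cancel ε 1)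
  have hHaff : ⇑(AffineMap.homothety u (1 - ε)) = H := funext fun Q => by
    rw [AffineMap.homothety_eq_lineMap, AffineMap.lineMap_apply_module, sub_sub_cancel]
  calc ⨅ Q ∈ stdSimplex ℝ Y, ⨆ P ∈ C, cDiv α W Q P
      ≤ ⨅ Q ∈ stdSimplex ℝ Y, ⨆ P ∈ C, (cDivReal α W (H Q) P : EReal) :=
        le_iInf₂ fun Q hQ => (iInf₂_le (H Q) (hH Q hQ)).trans_eq
          (biSup_congr fun P _ => cDiv_eq_cDivReal α hW (hHpos Q hQ) P)
    _ = _ := by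
      refine Sion.minimax' ⟨u, hu⟩ (convex_stdSimplex ℝ Y) (isCompact_stdSimplex ℝ Y)
        (fun P hP => ?_) (fun P hP => ?_) hCconv (fun Q _ => ?_) (fun Q _ => ?_)
      · refine (((continuousOn_cDiv hα.2 (fun x => (hW x).1) (hC P hP)).comp
          (by fun_prop : Continuous H).continuousOn fun Q hQ y => (hHpos Q hQ y).le).congr
          fun Q hQ => (cDiv_eq_cDivReal α hW (hHpos Q hQ) P).symm).lowerSemicontinuousOn
      · have hconv := ((convexOn_cDivReal hα hW (hC P hP)).comp_affineMap
          (AffineMap.homothety u (1 - ε))).subset (by rwa [hHaff]) (convex_stdSimplex ℝ Y)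
        rw [hHaff] at hconv
        exact hconv.quasiconvexOn.monotone_comp (g := Real.toEReal) EReal.coe_strictMono.monotone
      · exact (continuous_coe_real_ereal.comp (continuous_finsetSum _ fun x _ =>
          (continuous_apply x).mul continuous_const)).continuousOn.upperSemicontinuousOn
      · exact (concaveOn_cDivReal α W (H Q) hCconv).quasiconcaveOn.monotone_comp
          (g := Real.toEReal) EReal.coe_strictMono.monotone

theorem iInf_cDivReal_le {α : ℝ} (hα : α ∈ Icc (0 : ℝ) 1) {W : X → Y → ℝ}
    (hW : ∀ x, IsPMF (W x)) {P : X → ℝ} (hP : IsPMF P) {u : Y → ℝ} (hu : u ∈ stdSimplex ℝ Y)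
    (hu0 : ∀ y, 0 < u y) {M : ℝ} (hM : ∀ x, dAReal α (W x) u ≤ M) {ε : ℝ}
    (hε : ε ∈ Ioc (0 : ℝ) 1) {t : ℝ} (ht : ⨅ Q ∈ stdSimplex ℝ Y, cDiv α W Q P < t) :
    ⨅ Q ∈ stdSimplex ℝ Y, (cDivReal α W (ε • u + (1 - ε) • Q) P : EReal) ≤
      ((ε * M + (1 - ε) * t : ℝ) : EReal) := by
  obtain ⟨Q, hQ, hQt⟩ : ∃ Q ∈ stdSimplex ℝ Y, cDiv α W Q P < t := by
    simpa only [iInf_lt_iff, exists_prop] using ht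
  obtain ⟨Q', hQ', hQ'0, hQ't⟩ := exists_pos_cDiv_lt hα.2 (fun x => (hW x).1) hP.1 hu hu0 hQ hQt
  rw [cDiv_eq_cDivReal α hW hQ'0, EReal.coe_lt_coe_iff] at hQ't
  have hPu : cDivReal α W u P ≤ M := calc
    _ ≤ ∑ x, P x * M := Finset.sum_le_sum fun x _ => mul_le_mul_of_nonneg_left (hM x) (hP.1 x)
    _ = M := by rw [← Finset.sum_mul, hP.2, one_mul]
  refine (iInf₂_le Q' hQ').trans (EReal.coe_le_coe_iff.2 ?_)
  calc _ ≤ ε * cDivReal α W u P + (1 - ε) * cDivReal α W Q' P :=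
        (convexOn_cDivReal hα hW hP.1).2 hu0 hQ'0 hε.1.le (sub_nonneg.2 hε.2) (by ring)
    _ ≤ ε * M + (1 - ε) * t := add_le_add (mul_le_mul_of_nonneg_left hPu hε.1.le)
        (mul_le_mul_of_nonneg_left hQ't.le (sub_nonneg.2 hε.2))

end Divergences

theorem augustin_minimax_general {X Y : Type*} [Fintype X] [Fintype Y]
    [Nonempty Y]
    (α : ℝ) (hα : α ∈ Set.Ioc (0 : ℝ) 1)
    (W : X → Y → ℝ) (hW : ∀ x, IsPMF (W x))
    (C : Set (X → ℝ)) (hCpmf : ∀ P ∈ C, IsPMF P)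
    (hCconv : Convex ℝ C) :
    (⨆ P ∈ C, ⨅ Q ∈ {Q : Y → ℝ | IsPMF Q}, cDiv α W Q P) =
      ⨅ Q ∈ {Q : Y → ℝ | IsPMF Q}, ⨆ P ∈ C, cDiv α W Q P := by
  change (⨆ P ∈ C, ⨅ Q ∈ stdSimplex ℝ Y, cDiv α W Q P) =
    ⨅ Q ∈ stdSimplex ℝ Y, ⨆ P ∈ C, cDiv α W Q P
  refine le_antisymm (iSup₂_iInf₂_le_iInf₂_iSup₂ _ _ _)
    (le_of_forall_gt_imp_ge_of_dense fun t ht => ?_)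
  obtain ⟨t₀, hLt₀, ht₀⟩ := EReal.lt_iff_exists_real_btwn.1 ht
  obtain ⟨t₁, ht₀₁, ht₁⟩ := EReal.lt_iff_exists_real_btwn.1 ht₀
  obtain ⟨u, hu, hu0⟩ := exists_pos_mem_stdSimplex (ι := Y)
  obtain ⟨M, hM⟩ := Finite.exists_le fun x => dAReal α (W x) u
  have hlim : Tendsto (fun ε : ℝ => ε * M + (1 - ε) * t₀) (𝓝[>] 0) (𝓝 t₀) :=
    (Continuous.tendsto' (by fun_prop) 0 t₀ (by simp)).mono_left nhdsWithin_le_nhds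
  obtain ⟨ε, hεt, hε⟩ := ((hlim.eventually (eventually_lt_nhds (EReal.coe_lt_coe_iff.1 ht₀₁))).and
    (Ioc_mem_nhdsGT one_pos)).exists
  have hα' : α ∈ Icc (0 : ℝ) 1 := Ioc_subset_Icc_self hα
  calc ⨅ Q ∈ stdSimplex ℝ Y, ⨆ P ∈ C, cDiv α W Q P
      ≤ ⨆ P ∈ C, ⨅ Q ∈ stdSimplex ℝ Y, (cDivReal α W (ε • u + (1 - ε) • Q) P : EReal) :=
        iInf_iSup_cDiv_le_iSup_iInf_cDivReal hα' hW (fun P hP => (hCpmf P hP).1) hCconv hu hu0 hε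
    _ ≤ ((ε * M + (1 - ε) * t₀ : ℝ) : EReal) := iSup₂_le fun P hP =>
        iInf_cDivReal_le hα' hW (hCpmf P hP) hu hu0 hM hε ((le_iSup₂ P hP).trans_lt hLt₀)
    _ ≤ t := (EReal.coe_lt_coe_iff.2 hεt).le.trans ht₁.le

/-- minimax equality for the Augustin capacity over a convex constraint set. -/
theorem augustin_minimax {X Y : Type*} [Fintype X] [Fintype Y]
    [Nonempty X] [Nonempty Y]
    (α : ℝ) (hα : α ∈ Set.Ioc (0 : ℝ) 1)
    (W : X → Y → ℝ) (hW : ∀ x, IsPMF (W x))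
    (C : Set (X → ℝ)) (hCne : C.Nonempty) (hCpmf : ∀ P ∈ C, IsPMF P)
    (hCconv : Convex ℝ C) :
    (⨆ P ∈ C, ⨅ Q ∈ {Q : Y → ℝ | IsPMF Q}, cDiv α W Q P) =
      ⨅ Q ∈ {Q : Y → ℝ | IsPMF Q}, ⨆ P ∈ C, cDiv α W Q P :=
  augustin_minimax_general α hα W hW C hCpmf hCconv
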